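/- Let X be a quandle and X₁ ⊆ X a trivial subquandle, and define S, V : (X × X₁) × (X × X₁) → (X × X₁) × (X × X₁) by S((a,x),(b,y)) = ((b, y), (a*b, x)) and V((a,x),(b,y)) = ((b*⁻¹x, y), (a*y, x)). Then the mixed Yang–Baxter relation (V × id) ∘ (id × S) ∘ (V × id) = (id × V) ∘ (S × id) ∘ (id × V) holds as maps (X × X₁)³ → (X × X₁)³; hence (S,V) is a virtual switch on X × X₁. -/

import Mathlib

/-! Evaluated on a triple, the two sides have the same `X₁`-coordinates, and their
`X`-coordinates agree by two rack identities: self-distributivity, and the commutation of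
the actions of two elements of `X₁`, which holds because they fix each other. -/

namespace Paper

/-- `F × id` on `X × X × X`. -/
def mulId {X : Type*} (F : X × X → X × X) : X × X × X → X × X × X :=
  fun p => ((F (p.1, p.2.1)).1, (F (p.1, p.2.1)).2, p.2.2)

/-- `id × G` on `X × X × X`. -/
def idMul {X : Type*} (G : X × X → X × X) : X × X × X → X × X × X :=
  fun p => (p.1, G p.2)

/-- The set-theoretic Yang–Baxter equation. -/
def YB {X : Type*} (S : X × X → X × X) : Prop :=
  (mulId S) ∘ (idMul S) ∘ (mulId S) = (idMul S) ∘ (mulId S) ∘ (idMul S)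

/-- Non-degeneracy: `x ↦ Sˡ(a,x)` and `x ↦ Sʳ(x,b)` are bijections. -/
def NonDeg {X : Type*} (S : X × X → X × X) : Prop :=
  (∀ a : X, Function.Bijective fun x => (S (a, x)).1) ∧
  (∀ b : X, Function.Bijective fun x => (S (x, b)).2)

/-- The biquandle condition for a non-degenerate switch. -/
def BiqCond {X : Type*} (S : X × X → X × X) : Prop :=
  ∀ a : X, (∃ u, (S (u, a)).2 = a ∧ (S (u, a)).1 = u) ∧
           (∃ d, (S (a, d)).1 = a ∧ (S (a, d)).2 = d)

end Paper

namespace Rack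

open Quandles

variable {R : Type*} [Rack R]

theorem act_invAct_act_eq (x y a : R) : x ◃ (x ◃⁻¹ y) ◃ a = y ◃ x ◃ a := by
  rw [Shelf.self_distrib, act_invAct_eq]

theorem act_invAct_comm_of_act_eq {x y : R} (h : x ◃ y = y) (b : R) :
    y ◃ x ◃⁻¹ b = x ◃⁻¹ y ◃ b := by
  rw [← left_cancel x, act_invAct_eq, Shelf.self_distrib, h, act_invAct_eq]

end Rack

namespace Paper

open Quandles in
/-- The pair $(S,V)$ satisfies the mixed Yang–Baxter relation; hence it is a
virtual switch on `X × X₁`. -/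
theorem quandle_SV_mixed_relation (X : Type*) [Quandle X] (X₁ : Set X)
    (htriv : ∀ x ∈ X₁, ∀ y ∈ X₁, y ◃ x = x)
    (S V : (X × X₁) × (X × X₁) → (X × X₁) × (X × X₁))
    (hS : ∀ (a b : X) (x y : X₁),
      S ((a, x), (b, y)) = ((b, y), (b ◃ a, x)))
    (hV : ∀ (a b : X) (x y : X₁),
      V ((a, x), (b, y)) = (((x : X) ◃⁻¹ b, y), ((y : X) ◃ a, x))) :
    mulId V ∘ idMul S ∘ mulId V = idMul V ∘ mulId S ∘ idMul V := by
  funext ⟨⟨a, x⟩, ⟨b, y⟩, ⟨c, z⟩⟩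
  simp only [mulId, idMul, Function.comp_apply, hS, hV, Rack.act_invAct_act_eq,
    Rack.act_invAct_comm_of_act_eq (htriv z z.2 x x.2)]
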